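/- arXiv:0710.5450 — 2 statements merged into one kernel-verified Lean document; each statement's English description precedes it below -/
import Mathlib

section
/- Let θ ∈ (1/2, 1] and set F(z) = (1 − (1−θ)z)/(1 + θz) for z ≥ 0. Let 0 < γ < γ₁ < 1. Then there exists a constant C = C(θ, γ, γ₁) > 0 such that for all integers N ≥ 2 and 0 ≤ n < N−1, all Δt > 0, all t ∈ [nΔt, (n+1)Δt], and all λ > 0, one has | F(λΔt)^{N−n−1} / (1 + θλΔt) − e^{−λ(NΔt − t)} | · λ^{(1−γ₁)/2} ≤ C Δt^{γ/2} ((N−n−1)Δt)^{−(1−γ₁+γ)/2}. -/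
/-!
With `m = N - n - 1`, `z = λΔt`, `u = λ(NΔt - t) ∈ [mz, (m+1)z]` and `β = (1-γ₁)/2`, the claim
follows from `|F(z)^m/(1+θz) - e^{-u}| (mz)^β ≤ C/m`, since `1/m ≤ m^{-γ/2}`.
For `z ≤ 1`, `F(z) = e^{-z} + O(z²)` and `|F(z)| ≤ e^{-z/2}`, so the difference of `m`-th powers is
`O(m z² e^{-mz/2})`; for `z ≥ 1`, strong A-stability gives `|F(z)| ≤ ρ < 1` and both terms decay
exponentially in `m`. In either case the powers of `w = mz` are absorbed by `e^{-w/2}`.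
-/

open Real

lemma exists_rpow_mul_exp_neg_mul_le {p a : ℝ} (hp : 0 ≤ p) (ha : 0 < a) :
    ∃ K, 0 < K ∧ ∀ x, 0 ≤ x → x ^ p * exp (-(a * x)) ≤ K := by
  set n := ⌈p⌉₊
  refine ⟨1 + n.factorial / a ^ n, by positivity, fun x hx => ?_⟩
  have hxp : x ^ p ≤ 1 + x ^ n := by
    rcases le_total x 1 with hx1 | hx1
    · linarith [rpow_le_one hx hx1 hp, pow_nonneg hx n]
    · rw [← rpow_natCast]
      linarith [rpow_le_rpow_of_exponent_le hx1 (Nat.le_ceil p)]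
  have hxn : x ^ n * exp (-(a * x)) ≤ n.factorial / a ^ n := by
    have h := pow_div_factorial_le_exp (x := a * x) (mul_nonneg ha.le hx) n
    rw [div_le_iff₀ (by positivity), mul_pow] at h
    rw [le_div_iff₀ (by positivity), exp_neg]
    field_simp
    linarith
  have hexp : exp (-(a * x)) ≤ 1 := exp_le_one_iff.mpr (by nlinarith)
  nlinarith [exp_pos (-(a * x))]

lemma exists_rpow_mul_pow_le {p ρ : ℝ} (hp : 0 ≤ p) (hρ₀ : 0 < ρ) (hρ₁ : ρ < 1) :
    ∃ K, 0 < K ∧ ∀ m : ℕ, (m : ℝ) ^ p * ρ ^ m ≤ K := by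
  obtain ⟨K, hK, hbound⟩ := exists_rpow_mul_exp_neg_mul_le hp (neg_pos.mpr (log_neg hρ₀ hρ₁))
  refine ⟨K, hK, fun m => ?_⟩
  have h := hbound m m.cast_nonneg
  rw [neg_mul_eq_neg_mul, neg_neg, mul_comm, exp_mul, exp_log hρ₀, rpow_natCast] at h
  linarith

noncomputable def stabilityFun (θ z : ℝ) : ℝ := (1 - (1 - θ) * z) / (1 + θ * z)

section StabilityFun

variable {θ z : ℝ}

lemma stabilityFun_sub_one_sub (hz : 1 + θ * z ≠ 0) :
    stabilityFun θ z - (1 - z) = θ * z ^ 2 / (1 + θ * z) := by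
  unfold stabilityFun
  field_simp
  ring

lemma abs_stabilityFun_sub_exp_neg_le (hθ₀ : 0 ≤ θ) (hθ₁ : θ ≤ 1) (hz₀ : 0 ≤ z) (hz₁ : z ≤ 1) :
    |stabilityFun θ z - exp (-z)| ≤ 2 * z ^ 2 := by
  have hpos : 0 < 1 + θ * z := by positivity
  have hrat : θ * z ^ 2 / (1 + θ * z) ≤ z ^ 2 :=
    div_le_of_le_mul₀ hpos.le (sq_nonneg z) (by nlinarith [mul_nonneg hθ₀ hz₀, sq_nonneg z])
  have hexp := abs_exp_sub_one_sub_id_le (x := -z) (by rwa [abs_neg, abs_of_nonneg hz₀])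
  calc |stabilityFun θ z - exp (-z)|
      = |θ * z ^ 2 / (1 + θ * z) - (exp (-z) - 1 - -z)| := by
        rw [← stabilityFun_sub_one_sub hpos.ne']; ring_nf
    _ ≤ |θ * z ^ 2 / (1 + θ * z)| + |exp (-z) - 1 - -z| := abs_sub _ _
    _ ≤ z ^ 2 + z ^ 2 := by
        rw [abs_of_nonneg (by positivity)]; simp only [neg_sq] at hexp; linarith
    _ = 2 * z ^ 2 := by ring

lemma abs_stabilityFun_le_exp_neg_half (hθ₀ : 0 ≤ θ) (hθ₁ : θ ≤ 1) (hz₀ : 0 ≤ z) (hz₁ : z ≤ 1) :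
    |stabilityFun θ z| ≤ exp (-(z / 2)) := by
  have hpos : 0 < 1 + θ * z := by positivity
  have hθz : θ * z ≤ 1 := by nlinarith
  have hnonneg : 0 ≤ stabilityFun θ z := div_nonneg (by nlinarith) hpos.le
  rw [abs_of_nonneg hnonneg]
  calc stabilityFun θ z ≤ 1 - z / 2 := by
        rw [stabilityFun, div_le_iff₀ hpos]; nlinarith [mul_nonneg hz₀ (sub_nonneg.mpr hθz)]
    _ ≤ exp (-(z / 2)) := one_sub_le_exp_neg _

lemma exists_abs_stabilityFun_le_lt_one (hθ : 1 / 2 < θ) :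
    ∃ ρ, 0 < ρ ∧ ρ < 1 ∧ ∀ z, 1 ≤ z → |stabilityFun θ z| ≤ ρ := by
  have hθ₀ : 0 < θ := by linarith
  -- `F` decreases on `[1, ∞)` from `F 1 = θ / (1 + θ)` towards `F ∞ = -(1 - θ) / θ`.
  refine ⟨max (θ / (1 + θ)) ((1 - θ) / θ), lt_max_of_lt_left (by positivity),
    max_lt ((div_lt_one (by linarith)).mpr (by linarith)) ((div_lt_one hθ₀).mpr (by linarith)),
    fun z hz => abs_le.mpr ⟨?_, ?_⟩⟩
  · refine (neg_le_neg (le_max_right _ _)).trans ?_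
    rw [stabilityFun, ← neg_div, div_le_div_iff₀ hθ₀ (by positivity)]
    nlinarith
  · refine le_trans ?_ (le_max_left _ _)
    rw [stabilityFun, div_le_div_iff₀ (by positivity) (by positivity)]
    nlinarith

lemma abs_stabilityFun_pow_sub_exp_neg_le (hθ₀ : 0 ≤ θ) (hθ₁ : θ ≤ 1) (hz₀ : 0 ≤ z)
    (hz₁ : z ≤ 1) {m : ℕ} (hm : 1 ≤ m) :
    |stabilityFun θ z ^ m - exp (-(m * z))| ≤ 4 * m * z ^ 2 * exp (-(m * z / 2)) := by
  have hmax : max |stabilityFun θ z| |exp (-z)| ≤ exp (-(z / 2)) :=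
    max_le (abs_stabilityFun_le_exp_neg_half hθ₀ hθ₁ hz₀ hz₁)
      (by rw [abs_of_pos (exp_pos _)]; exact exp_le_exp.mpr (by linarith))
  have hhalf : exp (z / 2) ≤ 2 := by
    have : exp (z / 2) * exp (z / 2) < 4 := by
      rw [← exp_add]
      linarith [exp_le_exp.mpr (show z / 2 + z / 2 ≤ 1 by linarith), exp_one_lt_d9]
    nlinarith [exp_pos (z / 2)]
  have hgeom : exp (-(z / 2)) ^ (m - 1) ≤ 2 * exp (-(m * z / 2)) := by
    rw [← exp_nat_mul, Nat.cast_sub hm, Nat.cast_one,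
      show ((m : ℝ) - 1) * -(z / 2) = z / 2 + -(m * z / 2) by ring, exp_add]
    exact mul_le_mul_of_nonneg_right hhalf (exp_pos _).le
  rw [show exp (-(m * z)) = exp (-z) ^ m by rw [← exp_nat_mul]; ring_nf]
  calc |stabilityFun θ z ^ m - exp (-z) ^ m|
      ≤ |stabilityFun θ z - exp (-z)| * m * max |stabilityFun θ z| |exp (-z)| ^ (m - 1) :=
        abs_pow_sub_pow_le ..
    _ ≤ 2 * z ^ 2 * m * (2 * exp (-(m * z / 2))) := by
        gcongr
        · exact abs_stabilityFun_sub_exp_neg_le hθ₀ hθ₁ hz₀ hz₁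
        · exact (pow_le_pow_left₀ (le_max_of_le_left (abs_nonneg _)) hmax _).trans hgeom
    _ = 4 * m * z ^ 2 * exp (-(m * z / 2)) := by ring

lemma abs_stabilityFun_pow_div_sub_exp_neg_le (hθ₀ : 0 ≤ θ) (hθ₁ : θ ≤ 1) (hz₀ : 0 ≤ z)
    (hz₁ : z ≤ 1) {m : ℕ} (hm : 1 ≤ m) {u : ℝ} (hmu : m * z ≤ u) (hum : u ≤ (m + 1) * z) :
    |stabilityFun θ z ^ m / (1 + θ * z) - exp (-u)|
      ≤ (4 * m * z ^ 2 + 2 * z) * exp (-(m * z / 2)) := by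
  set E := exp (-(m * z / 2))
  set A := exp (-(m * z))
  have hpos : 0 < 1 + θ * z := by positivity
  have hA : 0 < A := exp_pos _
  have hAE : A ≤ E := exp_le_exp.mpr (by nlinarith [m.cast_nonneg (α := ℝ)])
  have hpow : |stabilityFun θ z ^ m / (1 + θ * z) - A / (1 + θ * z)|
      ≤ 4 * m * z ^ 2 * E := by
    rw [← sub_div, abs_div, abs_of_pos hpos]
    exact div_le_of_le_mul₀ hpos.le (by positivity)
      ((abs_stabilityFun_pow_sub_exp_neg_le hθ₀ hθ₁ hz₀ hz₁ hm).trans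
        (le_mul_of_one_le_right (by positivity) (by nlinarith [mul_nonneg hθ₀ hz₀])))
  have hdenom : |A / (1 + θ * z) - A| ≤ z * E := by
    have hlow : A * (1 - θ * z) ≤ A / (1 + θ * z) := by
      rw [le_div_iff₀ hpos]; nlinarith [mul_nonneg hA.le (sq_nonneg (θ * z))]
    have hθz : A * (θ * z) ≤ z * E :=
      (mul_le_mul hAE (by nlinarith) (by positivity) (exp_pos _).le).trans_eq (mul_comm _ _)
    rw [abs_sub_comm, abs_of_nonneg (sub_nonneg.mpr (div_le_self hA.le (by nlinarith)))]
    nlinarith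
  have hshift : |A - exp (-u)| ≤ z * E := by
    have hlow : A * (1 - (u - m * z)) ≤ exp (-u) := by
      rw [show -u = -(m * z) + -(u - m * z) by ring, exp_add]
      exact mul_le_mul_of_nonneg_left (one_sub_le_exp_neg _) hA.le
    rw [abs_of_nonneg (sub_nonneg.mpr (exp_le_exp.mpr (by linarith)))]
    nlinarith
  linarith [abs_sub_le (stabilityFun θ z ^ m / (1 + θ * z)) (A / (1 + θ * z)) (exp (-u)),
    abs_sub_le (A / (1 + θ * z)) A (exp (-u))]

lemma exists_abs_stabilityFun_pow_div_sub_exp_mul_rpow_le_of_le_one (hθ₀ : 0 ≤ θ) (hθ₁ : θ ≤ 1)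
    {β : ℝ} (hβ : 0 ≤ β) :
    ∃ C, 0 < C ∧ ∀ m : ℕ, 1 ≤ m → ∀ z : ℝ, 0 < z → z ≤ 1 → ∀ u : ℝ, m * z ≤ u → u ≤ (m + 1) * z →
      |stabilityFun θ z ^ m / (1 + θ * z) - exp (-u)| * (m * z) ^ β ≤ C / m := by
  obtain ⟨K₂, hK₂, hbound₂⟩ := exists_rpow_mul_exp_neg_mul_le (p := β + 2) (a := 1 / 2)
    (by linarith) (by norm_num)
  obtain ⟨K₁, hK₁, hbound₁⟩ := exists_rpow_mul_exp_neg_mul_le (p := β + 1) (a := 1 / 2)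
    (by linarith) (by norm_num)
  refine ⟨4 * K₂ + 2 * K₁, by positivity, fun m hm z hz₀ hz₁ u hmu hum => ?_⟩
  have hm₀ : (0 : ℝ) < m := by exact_mod_cast hm
  have hw : 0 < (m : ℝ) * z := mul_pos hm₀ hz₀
  have hrescale : (4 * m * z ^ 2 + 2 * z) * exp (-(m * z / 2)) * (m * z) ^ β
      = (4 * ((m * z) ^ (β + 2) * exp (-(1 / 2 * (m * z))))
        + 2 * ((m * z) ^ (β + 1) * exp (-(1 / 2 * (m * z))))) / m := by
    rw [rpow_add hw, rpow_add hw, rpow_two, rpow_one]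
    field_simp
  calc |stabilityFun θ z ^ m / (1 + θ * z) - exp (-u)| * (m * z) ^ β
      ≤ (4 * m * z ^ 2 + 2 * z) * exp (-(m * z / 2)) * (m * z) ^ β :=
        mul_le_mul_of_nonneg_right
          (abs_stabilityFun_pow_div_sub_exp_neg_le hθ₀ hθ₁ hz₀.le hz₁ hm hmu hum)
          (rpow_nonneg hw.le _)
    _ = _ := hrescale
    _ ≤ (4 * K₂ + 2 * K₁) / m := by
        gcongr
        · exact hbound₂ _ hw.le
        · exact hbound₁ _ hw.le

lemma exists_abs_stabilityFun_pow_div_sub_exp_mul_rpow_le_of_one_le (hθ : 1 / 2 < θ)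
    {β : ℝ} (hβ₀ : 0 ≤ β) (hβ₁ : β ≤ 1) :
    ∃ C, 0 < C ∧ ∀ m : ℕ, 1 ≤ m → ∀ z : ℝ, 1 ≤ z → ∀ u : ℝ, m * z ≤ u →
      |stabilityFun θ z ^ m / (1 + θ * z) - exp (-u)| * (m * z) ^ β ≤ C / m := by
  have hθ₀ : 0 < θ := by linarith
  obtain ⟨ρ, hρ₀, hρ₁, hρ⟩ := exists_abs_stabilityFun_le_lt_one hθ
  obtain ⟨K, hK, hdecay⟩ := exists_rpow_mul_pow_le (p := β + 1) (by linarith) hρ₀ hρ₁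
  obtain ⟨K', hK', hbound⟩ := exists_rpow_mul_exp_neg_mul_le (p := β + 1) (a := 1)
    (by linarith) one_pos
  refine ⟨K / θ + K', by positivity, fun m hm z hz u hmu => ?_⟩
  have hm₀ : (0 : ℝ) < m := by exact_mod_cast hm
  have hz₀ : 0 < z := by linarith
  have hw : (m : ℝ) ≤ m * z := le_mul_of_one_le_right hm₀.le hz
  have hscheme : |stabilityFun θ z ^ m / (1 + θ * z)| * (m * z) ^ β ≤ K / θ / m :=
    calc |stabilityFun θ z ^ m / (1 + θ * z)| * (m * z) ^ β
        ≤ ρ ^ m / (θ * z) * (m ^ β * z) := by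
          have hθz : θ * z ≤ |1 + θ * z| := by
            rw [abs_of_pos (by positivity)]; linarith
          rw [abs_div, abs_pow, mul_rpow hm₀.le hz₀.le]
          gcongr
          · exact hρ z hz
          · exact rpow_le_self_of_one_le hz hβ₁
      _ = (m : ℝ) ^ (β + 1) * ρ ^ m / θ / m := by
          rw [rpow_add_one hm₀.ne']
          field_simp
      _ ≤ K / θ / m := by gcongr; exact hdecay m
  have hsolution : exp (-u) * (m * z) ^ β ≤ K' / m :=
    calc exp (-u) * (m * z) ^ β
        ≤ (m * z) ^ (β + 1) * exp (-(1 * (m * z))) / (m * z) := by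
          rw [rpow_add_one (by positivity), one_mul]
          field_simp
          gcongr
      _ ≤ K' / m := by
          gcongr
          exact hbound _ (by positivity)
  calc |stabilityFun θ z ^ m / (1 + θ * z) - exp (-u)| * (m * z) ^ β
      ≤ (|stabilityFun θ z ^ m / (1 + θ * z)| + |exp (-u)|) * (m * z) ^ β := by
        gcongr; exact abs_sub _ _
    _ ≤ K / θ / m + K' / m := by
        rw [add_mul, abs_of_pos (exp_pos _)]; exact add_le_add hscheme hsolution
    _ = (K / θ + K') / m := by ring

lemma exists_abs_stabilityFun_pow_div_sub_exp_mul_rpow_le (hθ₀ : 1 / 2 < θ) (hθ₁ : θ ≤ 1)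
    {β : ℝ} (hβ₀ : 0 ≤ β) (hβ₁ : β ≤ 1) :
    ∃ C, 0 < C ∧ ∀ m : ℕ, 1 ≤ m → ∀ z : ℝ, 0 < z → ∀ u : ℝ, m * z ≤ u → u ≤ (m + 1) * z →
      |stabilityFun θ z ^ m / (1 + θ * z) - exp (-u)| * (m * z) ^ β ≤ C / m := by
  obtain ⟨C₁, hC₁, hsmall⟩ :=
    exists_abs_stabilityFun_pow_div_sub_exp_mul_rpow_le_of_le_one (by linarith) hθ₁ hβ₀
  obtain ⟨C₂, hC₂, hlarge⟩ :=
    exists_abs_stabilityFun_pow_div_sub_exp_mul_rpow_le_of_one_le hθ₀ hβ₀ hβ₁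
  refine ⟨max C₁ C₂, lt_max_of_lt_left hC₁, fun m hm z hz u hmu hum => ?_⟩
  rcases le_total z 1 with hz₁ | hz₁
  · exact (hsmall m hm z hz hz₁ u hmu hum).trans (by gcongr; exact le_max_left _ _)
  · exact (hlarge m hm z hz₁ u hmu).trans (by gcongr; exact le_max_right _ _)

end StabilityFun

lemma div_mul_rpow_neg_le {C m s β δ : ℝ} (hC : 0 ≤ C) (hm : 1 ≤ m) (hs : 0 < s) (hδ : δ ≤ 1) :
    C / m * (m * s) ^ (-β) ≤ C * s ^ δ * (m * s) ^ (-(β + δ)) := by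
  have hm₀ : 0 < m := by linarith
  have hrhs : C * s ^ δ * (m * s) ^ (-(β + δ)) = C * m ^ (-δ) * (m * s) ^ (-β) := by
    rw [neg_add, rpow_add (by positivity), mul_rpow hm₀.le hs.le (z := -δ), rpow_neg hs.le δ]
    field_simp
  rw [hrhs, div_eq_mul_inv, ← rpow_neg_one]
  gcongr

/-- Estimate (eq:Nn_1) of the paper (proved in the appendix): for the stability
function `F(z) = (1-(1-θ)z)/(1+θz)` of the θ-scheme with `θ ∈ (1/2,1]` and
`0 < γ < γ₁ < 1`, there is `C > 0` such that for all integers `N ≥ 2`,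
`0 ≤ n < N-1`, all `Δt > 0`, `t ∈ [nΔt, (n+1)Δt]` and `λ > 0`,
`|F(λΔt)^{N-n-1}/(1+θλΔt) - e^{-λ(NΔt-t)}| λ^{(1-γ₁)/2}
   ≤ C Δt^{γ/2} ((N-n-1)Δt)^{-(1-γ₁+γ)/2}`. -/
theorem stmt_9 (θ γ γ₁ : ℝ) (hθ0 : 1 / 2 < θ) (hθ1 : θ ≤ 1)
    (hγ0 : 0 < γ) (hγγ₁ : γ < γ₁) (hγ₁ : γ₁ < 1)
    (F : ℝ → ℝ) (hF : ∀ z : ℝ, 0 ≤ z → F z = (1 - (1 - θ) * z) / (1 + θ * z)) :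
    ∃ C : ℝ, 0 < C ∧ ∀ N : ℕ, 2 ≤ N → ∀ n : ℕ, n < N - 1 →
      ∀ Δt : ℝ, 0 < Δt → ∀ t : ℝ, n * Δt ≤ t → t ≤ (n + 1) * Δt →
      ∀ lam : ℝ, 0 < lam →
      |F (lam * Δt) ^ (N - n - 1) / (1 + θ * lam * Δt) -
          Real.exp (-(lam * (N * Δt - t)))| * lam ^ ((1 - γ₁) / 2) ≤
        C * Δt ^ (γ / 2) * (((N - n - 1 : ℕ) : ℝ) * Δt) ^ (-(1 - γ₁ + γ) / 2) := by
  obtain ⟨C, hC, hkey⟩ := exists_abs_stabilityFun_pow_div_sub_exp_mul_rpow_le hθ0 hθ1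
    (β := (1 - γ₁) / 2) (by linarith) (by linarith)
  refine ⟨C, hC, fun N hN n hn Δt hΔt t ht₀ ht₁ lam hlam => ?_⟩
  have hm : 1 ≤ N - n - 1 := by omega
  have hmN : ((N - n - 1 : ℕ) : ℝ) = N - n - 1 := by
    rw [Nat.cast_sub (by omega), Nat.cast_sub (by omega), Nat.cast_one]
  set m := N - n - 1
  have hz : 0 < lam * Δt := mul_pos hlam hΔt
  have hFz : F (lam * Δt) = stabilityFun θ (lam * Δt) := hF _ hz.le
  have hbound := hkey m hm (lam * Δt) hz (lam * (N * Δt - t))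
    (by rw [hmN]; nlinarith) (by rw [hmN]; nlinarith)
  have hlam_rpow : lam ^ ((1 - γ₁) / 2)
      = (m * (lam * Δt)) ^ ((1 - γ₁) / 2) * (m * Δt) ^ (-((1 - γ₁) / 2)) := by
    rw [show (m : ℝ) * (lam * Δt) = lam * (m * Δt) by ring, mul_rpow hlam.le (by positivity),
      mul_assoc, ← rpow_add (by positivity), add_neg_cancel, rpow_zero, mul_one]
  rw [hFz, mul_assoc θ, hlam_rpow, ← mul_assoc,
    show -(1 - γ₁ + γ) / 2 = -((1 - γ₁) / 2 + γ / 2) by ring]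
  exact (mul_le_mul_of_nonneg_right hbound (by positivity)).trans
    (div_mul_rpow_neg_le hC.le (by exact_mod_cast hm) hΔt (by linarith))
end

section
/- Let θ ∈ (1/2, 1] and F(z) = (1 − (1−θ)z)/(1 + θz). Then there exists a constant κ = κ(θ) > 0 such that for every integer N ≥ 1, sup_{z ≥ 0} | e^{−Nz} − F(z)^N | ≤ κ / N. -/
/-!
For `z ≤ 1` the scheme is consistent of order one, `|e^{-z} - F(z)| ≤ z²`, and both `e^{-z}` and
`F(z)` lie in `[-e^{-z/2}, e^{-z/2}]`; telescoping `a^N - b^N` gives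
`|e^{-Nz} - F(z)^N| ≤ N z² e^{-(N-1)z/2}`, which is `O(1/N)` because `u² e^{-u}` is bounded.
For `z ≥ 1` strong A-stability (`θ > 1/2`) keeps `|F(z)| ≤ c < 1`, so both `e^{-Nz}` and
`F(z)^N` decay geometrically, and `N cᴺ ≤ (1 - c)⁻¹`.
-/

open Real

noncomputable def thetaStability (θ z : ℝ) : ℝ := (1 - (1 - θ) * z) / (1 + θ * z)

lemma mul_exp_neg_le_one (x : ℝ) : x * exp (-x) ≤ 1 :=
  (mul_exp_neg_le_exp_neg_one x).trans (exp_le_one_iff.mpr (by norm_num))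

lemma sq_mul_exp_neg_le_two {u : ℝ} (hu : 0 ≤ u) : u ^ 2 * exp (-u) ≤ 2 := by
  have h : u ^ 2 / 2 ≤ exp u := by nlinarith [quadratic_le_exp_of_nonneg hu]
  rw [exp_neg, ← div_eq_mul_inv, div_le_iff₀ (exp_pos u)]
  linarith

lemma natCast_mul_pow_le_inv_one_sub {c : ℝ} (hc0 : 0 ≤ c) (hc1 : c < 1) (n : ℕ) :
    n * c ^ n ≤ (1 - c)⁻¹ := by
  have hpos : 0 < 1 - c := by linarith
  have hpow : c ^ n ≤ exp (-((1 - c) * n)) := by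
    calc c ^ n ≤ exp (-(1 - c)) ^ n :=
          pow_le_pow_left₀ hc0 (by linarith [one_sub_le_exp_neg (1 - c)]) n
      _ = exp (-((1 - c) * n)) := by rw [← exp_nat_mul]; ring_nf
  calc n * c ^ n ≤ (1 - c)⁻¹ * ((1 - c) * n * exp (-((1 - c) * n))) := by
        rw [← mul_assoc, ← mul_assoc, inv_mul_cancel₀ hpos.ne', one_mul]
        exact mul_le_mul_of_nonneg_left hpow (Nat.cast_nonneg n)
    _ ≤ (1 - c)⁻¹ := mul_le_of_le_one_right (inv_nonneg.mpr hpos.le) (mul_exp_neg_le_one _)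

section ThetaStability

variable {θ z : ℝ}

lemma thetaStability_eq_one_sub (hθ : 0 ≤ θ) (hz : 0 ≤ z) :
    thetaStability θ z = 1 - z / (1 + θ * z) := by
  have : 0 < 1 + θ * z := by positivity
  rw [thetaStability]
  field_simp
  ring

lemma abs_exp_neg_sub_thetaStability_le (hθ0 : 0 ≤ θ) (hθ1 : θ ≤ 1) (hz : 0 ≤ z) :
    |exp (-z) - thetaStability θ z| ≤ z ^ 2 := by
  have hden : 0 < 1 + θ * z := by positivity
  have hexp : exp (-z) ≤ 1 - z + z ^ 2 := by
    calc exp (-z) = (exp z)⁻¹ := exp_neg z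
      _ ≤ (1 + z)⁻¹ := inv_anti₀ (by positivity) (by linarith [add_one_le_exp z])
      _ ≤ 1 - z + z ^ 2 := by
        rw [inv_le_iff_one_le_mul₀ (by positivity)]; nlinarith [pow_nonneg hz 3]
  have hlow : z / (1 + θ * z) ≤ z := div_le_self hz (by nlinarith)
  have hupp : z - θ * z ^ 2 ≤ z / (1 + θ * z) := by
    rw [le_div_iff₀ hden]; nlinarith [mul_nonneg (sq_nonneg θ) (pow_nonneg hz 3)]
  rw [thetaStability_eq_one_sub hθ0 hz, abs_le]
  constructor <;> nlinarith [one_sub_le_exp_neg z, mul_le_mul_of_nonneg_right hθ1 (sq_nonneg z)]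

lemma abs_thetaStability_le_exp_neg_half (hθ0 : 0 ≤ θ) (hθ1 : θ ≤ 1) (hz0 : 0 ≤ z) (hz1 : z ≤ 1) :
    |thetaStability θ z| ≤ exp (-(z / 2)) := by
  have hden : 0 < 1 + θ * z := by positivity
  have hlow : z / (1 + θ * z) ≤ z := div_le_self hz0 (by nlinarith)
  have hupp : z / 2 ≤ z / (1 + θ * z) :=
    div_le_div_of_nonneg_left hz0 hden (by nlinarith)
  rw [thetaStability_eq_one_sub hθ0 hz0, abs_le]
  constructor <;> linarith [one_sub_le_exp_neg (z / 2), exp_pos (-(z / 2))]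

lemma max_half_inv_sub_one_lt_one (hθ : 1 / 2 < θ) : max (1 / 2) (θ⁻¹ - 1) < 1 := by
  have hinv : θ⁻¹ < 2 := (inv_lt_comm₀ (by linarith) two_pos).mpr (by linarith)
  exact max_lt (by norm_num) (by linarith)

lemma abs_thetaStability_le_max (hθ0 : 0 < θ) (hθ1 : θ ≤ 1) (hz : 1 ≤ z) :
    |thetaStability θ z| ≤ max (1 / 2) (θ⁻¹ - 1) := by
  have hden : 0 < 1 + θ * z := by positivity
  have hlow : 1 / 2 ≤ z / (1 + θ * z) := by
    rw [div_le_div_iff₀ (by norm_num) hden]; nlinarith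
  have hupp : z / (1 + θ * z) ≤ θ⁻¹ := by
    rw [div_le_iff₀ hden, mul_add, inv_mul_cancel_left₀ hθ0.ne']; linarith [inv_pos.mpr hθ0]
  rw [thetaStability_eq_one_sub hθ0.le (by linarith), abs_le]
  constructor <;> linarith [le_max_left (1 / 2 : ℝ) (θ⁻¹ - 1), le_max_right (1 / 2 : ℝ) (θ⁻¹ - 1)]

lemma natCast_mul_abs_exp_neg_mul_sub_thetaStability_pow_le_of_le_one (hθ0 : 0 ≤ θ)
    (hθ1 : θ ≤ 1) (hz0 : 0 ≤ z) (hz1 : z ≤ 1) (N : ℕ) :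
    N * |exp (-(N * z)) - thetaStability θ z ^ N| ≤ 8 * exp (1 / 2) := by
  obtain _ | n := N
  · simp only [Nat.cast_zero, zero_mul]; positivity
  have hρ : max |exp (-z)| |thetaStability θ z| ≤ exp (-(z / 2)) :=
    max_le (by rw [abs_of_pos (exp_pos _)]; exact exp_le_exp.mpr (by linarith))
      (abs_thetaStability_le_exp_neg_half hθ0 hθ1 hz0 hz1)
  have hdiff : |exp (-z) ^ (n + 1) - thetaStability θ z ^ (n + 1)| ≤
      z ^ 2 * (n + 1 : ℕ) * exp (-(z / 2)) ^ n := by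
    refine (abs_pow_sub_pow_le _ _ _).trans ?_
    rw [Nat.add_sub_cancel]
    gcongr
    exact abs_exp_neg_sub_thetaStability_le hθ0 hθ1 hz0
  -- with `u = (n + 1) z / 2` the bound is `4 u² e^{-u} e^{z/2}`
  set u : ℝ := (n + 1 : ℕ) * z / 2
  have hsplit : exp (-(z / 2)) ^ n = exp (-u) * exp (z / 2) := by
    rw [← exp_nat_mul, ← exp_add]; push_cast [u]; ring_nf
  have hpow : exp (-((n + 1 : ℕ) * z)) = exp (-z) ^ (n + 1) := by
    rw [← exp_nat_mul]; ring_nf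
  calc ((n + 1 : ℕ) : ℝ) * |exp (-((n + 1 : ℕ) * z)) - thetaStability θ z ^ (n + 1)|
      ≤ (n + 1 : ℕ) * (z ^ 2 * (n + 1 : ℕ) * exp (-(z / 2)) ^ n) := by
        rw [hpow]; exact mul_le_mul_of_nonneg_left hdiff (Nat.cast_nonneg _)
    _ = 4 * (u ^ 2 * exp (-u)) * exp (z / 2) := by rw [hsplit]; ring
    _ ≤ 4 * 2 * exp (1 / 2) := by
        gcongr
        exact sq_mul_exp_neg_le_two (by positivity)
    _ = 8 * exp (1 / 2) := by norm_num

lemma natCast_mul_abs_exp_neg_mul_sub_thetaStability_pow_le_of_one_le (hθ0 : 1 / 2 < θ)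
    (hθ1 : θ ≤ 1) (hz : 1 ≤ z) (N : ℕ) :
    N * |exp (-(N * z)) - thetaStability θ z ^ N| ≤ 1 + (1 - max (1 / 2) (θ⁻¹ - 1))⁻¹ := by
  have hθ : 0 < θ := by linarith
  have hc := max_half_inv_sub_one_lt_one hθ0
  have hexp : N * exp (-(N * z)) ≤ 1 := by
    calc N * exp (-(N * z)) ≤ N * z * exp (-(N * z)) := by
          gcongr; exact le_mul_of_one_le_right (Nat.cast_nonneg N) hz
      _ ≤ 1 := mul_exp_neg_le_one _
  have hstab : N * |thetaStability θ z| ^ N ≤ (1 - max (1 / 2) (θ⁻¹ - 1))⁻¹ :=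
    (mul_le_mul_of_nonneg_left (pow_le_pow_left₀ (abs_nonneg _)
      (abs_thetaStability_le_max hθ hθ1 hz) N) (Nat.cast_nonneg N)).trans
      (natCast_mul_pow_le_inv_one_sub (by positivity) hc N)
  calc N * |exp (-(N * z)) - thetaStability θ z ^ N|
      ≤ N * (exp (-(N * z)) + |thetaStability θ z| ^ N) := by
        gcongr
        refine (abs_sub _ _).trans_eq ?_
        rw [abs_of_pos (exp_pos _), abs_pow]
    _ ≤ 1 + (1 - max (1 / 2) (θ⁻¹ - 1))⁻¹ := by rw [mul_add]; exact add_le_add hexp hstab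

end ThetaStability

/-- Rational approximation estimate (eq:time_error_det), due to Le Roux: for the
strongly A-stable θ-scheme with `θ ∈ (1/2,1]` and stability function
`F(z) = (1-(1-θ)z)/(1+θz)`, there is `κ > 0` such that for every integer `N ≥ 1`,
`sup_{z ≥ 0} |e^{-Nz} - F(z)^N| ≤ κ / N`. -/
theorem stmt_10 (θ : ℝ) (hθ0 : 1 / 2 < θ) (hθ1 : θ ≤ 1)
    (F : ℝ → ℝ) (hF : ∀ z : ℝ, 0 ≤ z → F z = (1 - (1 - θ) * z) / (1 + θ * z)) :
    ∃ κ : ℝ, 0 < κ ∧ ∀ N : ℕ, 1 ≤ N → ∀ z : ℝ, 0 ≤ z →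
      |Real.exp (-(N * z)) - F z ^ N| ≤ κ / N := by
  have hc : 0 < (1 - max (1 / 2) (θ⁻¹ - 1))⁻¹ :=
    inv_pos.mpr (sub_pos.mpr (max_half_inv_sub_one_lt_one hθ0))
  refine ⟨8 * exp (1 / 2) + (1 + (1 - max (1 / 2) (θ⁻¹ - 1))⁻¹), by positivity, ?_⟩
  intro N hN z hz
  rw [hF z hz, le_div_iff₀ (by exact_mod_cast hN), mul_comm]
  rcases le_total z 1 with hz1 | hz1
  · exact (natCast_mul_abs_exp_neg_mul_sub_thetaStability_pow_le_of_le_one (by linarith) hθ1 hz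
      hz1 N).trans
      (le_add_of_nonneg_right (by positivity))
  · exact (natCast_mul_abs_exp_neg_mul_sub_thetaStability_pow_le_of_one_le hθ0 hθ1 hz1 N).trans
      (le_add_of_nonneg_left (by positivity))
end
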